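/- Let α be a type and g : α → α. Then for all k, r, x ∈ ℕ and y ∈ α, the k-th iterate of the jump operator applied to F_g 0 agrees with F_g k: J^[k] (F_g 0) r x y = F_g k r x y. -/
import Mathlib


/-- The paper's sequence of polynomial-length iterators `F_g`, parameterized by `g`. -/
def F {α : Type*} (g : α → α) : ℕ → ℕ → ℕ → α → α
  | 0, _, _, y => g y
  | _ + 1, 0, _, y => y
  | k + 1, t + 1, x, y => F g k x x (F g (k + 1) t x y)
  termination_by k t => (k, t)

/-- The jump operator `Δ[·]` of the paper. -/
def J {α : Type*} (f : ℕ → ℕ → α → α) : ℕ → ℕ → α → α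
  | 0, _, y => y
  | r + 1, x, y => f x x (J f r x y)

lemma J_F {α : Type*} (g : α → α) (k : ℕ) : J (F g k) = F g (k + 1) := by
  funext r
  induction r with
  | zero => funext x y; simp [J, F]
  | succ n ih => funext x y; simp [J, F, congrFun ih]

theorem stmt_5 {α : Type*} (g : α → α) :
    ∀ (k r x : ℕ) (y : α), J^[k] (F g 0) r x y = F g k r x y := by
  intro k
  induction k with
  | zero => intro r x y; rfl
  | succ n ih =>
      rw [Function.iterate_succ_apply']
      have : J^[n] (F g 0) = F g n := by funext r x y; exact ih r x y
      rw [this, J_F]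
      intro r x y; rfl
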